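/- arXiv:2508.02803 — 2 statements merged into one kernel-verified Lean document; each statement's English description precedes it below -/
import Mathlib

section
/- Let N ≥ 1, let d > 0, let h_0, …, h_{N−1} be real numbers, and let f = Σ_{i=0}^{N−1} h_i · 𝟙_{[a + i·d, a + (i+1)·d)}. Then for every integer k with 0 ≤ k ≤ 2N−2, the autoconvolution satisfies (f*f)(2a + (k+1)·d) = d · Σ_{i+j=k} h_i h_j, where the sum runs over pairs of indices 0 ≤ i, j ≤ N−1 with i + j = k. -/
/-! Expanding the product, `(f*f)(x) = ∑ᵢ ∑ⱼ hᵢ hⱼ |Iᵢ ∩ (x - Iⱼ)|` with `Iᵢ` the `i`-th cell.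
At the node `x = 2a + (k+1)d` the reflected cell `x - Iⱼ` is, up to its endpoints, the cell
of index `k - j`; cells of distinct integer index are disjoint, so only the pairs with
`i + j = k` contribute, each a full overlap of length `d`. -/

open MeasureTheory

/-- The autoconvolution `(f*f)(x) = ∫ f(t) f(x−t) dt`. -/
noncomputable def autoconv (f : ℝ → ℝ) : ℝ → ℝ := fun x => ∫ t, f t * f (x - t)

open Set

lemma indicator_one_mul_indicator_one_sub {α M₀ : Type*} [Sub α] [MulZeroOneClass M₀]
    (s t : Set α) (x u : α) :
    s.indicator (1 : α → M₀) u * t.indicator 1 (x - u) = (s ∩ (x - ·) ⁻¹' t).indicator 1 u := by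
  rw [inter_indicator_one, Pi.mul_apply, ← indicator_comp_right]
  rfl

section

variable {α : Type*} [MeasurableSpace α] [Sub α] [MeasurableSub α] {μ : Measure α}
  {s t : Set α}

lemma integrable_indicator_one_mul_indicator_one_sub (hs : MeasurableSet s) (hμs : μ s ≠ ⊤)
    (ht : MeasurableSet t) (x : α) :
    Integrable (fun u => s.indicator (1 : α → ℝ) u * t.indicator 1 (x - u)) μ := by
  simp_rw [indicator_one_mul_indicator_one_sub]
  exact (integrable_indicator_iff (hs.inter (measurable_const_sub x ht))).2
    (integrableOn_const (ne_top_of_le_ne_top hμs (measure_mono inter_subset_left)))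

lemma integral_indicator_one_mul_indicator_one_sub (hs : MeasurableSet s)
    (ht : MeasurableSet t) (x : α) :
    ∫ u, s.indicator (1 : α → ℝ) u * t.indicator 1 (x - u) ∂μ = μ.real (s ∩ (x - ·) ⁻¹' t) := by
  simp_rw [indicator_one_mul_indicator_one_sub]
  exact integral_indicator_one (hs.inter (measurable_const_sub x ht))

end

lemma autoconv_sum_mul {ι : Type*} (s : Finset ι) (c : ι → ℝ) (g : ι → ℝ → ℝ) (x : ℝ)
    (hg : ∀ i ∈ s, ∀ j ∈ s, Integrable fun t => g i t * g j (x - t)) :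
    autoconv (fun y => ∑ i ∈ s, c i * g i y) x =
      ∑ i ∈ s, ∑ j ∈ s, c i * c j * ∫ t, g i t * g j (x - t) := by
  have hexpand : ∀ t, (∑ i ∈ s, c i * g i t) * (∑ j ∈ s, c j * g j (x - t)) =
      ∑ i ∈ s, ∑ j ∈ s, c i * c j * (g i t * g j (x - t)) := fun t => by
    rw [Finset.sum_mul_sum]
    exact Finset.sum_congr rfl fun i _ => Finset.sum_congr rfl fun j _ => by ring
  simp only [autoconv, hexpand]
  rw [integral_finsetSum _ fun i hi =>
    integrable_finsetSum _ fun j hj => (hg i hi j hj).const_mul _]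
  refine Finset.sum_congr rfl fun i hi => ?_
  rw [integral_finsetSum _ fun j hj => (hg i hi j hj).const_mul _]
  simp only [integral_const_mul]

lemma volume_real_Ico_inter_Ioc_cells (a : ℝ) {d : ℝ} (hd : 0 ≤ d) (m n : ℤ) :
    volume.real (Ico (a + m * d) (a + (m + 1) * d) ∩ Ioc (a + n * d) (a + (n + 1) * d)) =
      if m = n then d else 0 := by
  rw [measureReal_congr ((ae_eq_refl _).inter Ico_ae_eq_Ioc.symm)]
  split_ifs with hmn
  · subst hmn
    rw [inter_self, Real.volume_real_Ico_of_le (by nlinarith)]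
    ring
  · have := pairwise_disjoint_Ico_add_zsmul a d hmn
    simp only [Function.onFun, zsmul_eq_mul, Int.cast_add, Int.cast_one] at this
    rw [this.inter_eq, measureReal_empty]

lemma integral_cell_mul_cell_at_node (a : ℝ) {d : ℝ} (hd : 0 ≤ d) (i j k : ℕ) :
    ∫ t, (Ico (a + i * d) (a + (i + 1) * d)).indicator (1 : ℝ → ℝ) t *
        (Ico (a + j * d) (a + (j + 1) * d)).indicator 1 (2 * a + (k + 1) * d - t) =
      if i + j = k then d else 0 := by
  rw [integral_indicator_one_mul_indicator_one_sub measurableSet_Ico measurableSet_Ico,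
    preimage_const_sub_Ico]
  have hleft : 2 * a + (k + 1) * d - (a + (j + 1) * d) = a + ((k - j : ℤ) : ℝ) * d := by
    push_cast; ring
  have hright : 2 * a + (k + 1) * d - (a + j * d) = a + ((k - j : ℤ) + 1 : ℝ) * d := by
    push_cast; ring
  rw [hleft, hright]
  have hcells := volume_real_Ico_inter_Ioc_cells a hd i (k - j)
  rw [Int.cast_natCast] at hcells
  rw [hcells]
  exact if_congr (by omega) rfl rfl

theorem autoconv_step_node_general (N : ℕ) (a d : ℝ) (hd : 0 < d)
    (h : Fin N → ℝ) (f : ℝ → ℝ)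
    (hf : f = fun x => ∑ i : Fin N,
      h i * Set.indicator (Set.Ico (a + (i : ℕ) * d) (a + ((i : ℕ) + 1) * d))
        (fun _ => (1 : ℝ)) x)
    (k : ℕ) :
    autoconv f (2 * a + ((k : ℝ) + 1) * d) =
      d * ∑ p ∈ Finset.univ.filter
        (fun p : Fin N × Fin N => (p.1 : ℕ) + (p.2 : ℕ) = k), h p.1 * h p.2 := by
  subst hf
  simp only [← Pi.one_def]
  rw [autoconv_sum_mul _ _ _ _ fun i _ j _ => integrable_indicator_one_mul_indicator_one_sub
    measurableSet_Ico (by simp) measurableSet_Ico _]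
  simp only [integral_cell_mul_cell_at_node a hd.le, Finset.sum_filter, Finset.mul_sum,
    ← Finset.univ_product_univ, Finset.sum_product]
  refine Finset.sum_congr rfl fun i _ => Finset.sum_congr rfl fun j _ => ?_
  split_ifs <;> ring

/-- For a step function with heights `h` on `N` equally spaced intervals of
width `d`, the autoconvolution at the node `2a + (k+1)d` equals `d` times the `k`-th entry
of the discrete autoconvolution of `h`. -/
theorem autoconv_step_node (N : ℕ) (hN : 1 ≤ N) (a d : ℝ) (hd : 0 < d)
    (h : Fin N → ℝ) (f : ℝ → ℝ)
    (hf : f = fun x => ∑ i : Fin N,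
      h i * Set.indicator (Set.Ico (a + (i : ℕ) * d) (a + ((i : ℕ) + 1) * d))
        (fun _ => (1 : ℝ)) x)
    (k : ℕ) (hk : k ≤ 2 * N - 2) :
    autoconv f (2 * a + ((k : ℝ) + 1) * d) =
      d * ∑ p ∈ Finset.univ.filter
        (fun p : Fin N × Fin N => (p.1 : ℕ) + (p.2 : ℕ) = k), h p.1 * h p.2 :=
  autoconv_step_node_general N a d hd h f hf k
end

section
/- Let h_0, …, h_{N−1} be nonnegative reals, not all zero, and let f = Σ_{i=0}^{N−1} h_i · 𝟙_{[a + i·d, a + (i+1)·d)} with d > 0. Write c_k = Σ_{i+j=k} h_i h_j for 0 ≤ k ≤ 2N−2 (the discrete autoconvolution of h), with the convention c_{−1} = c_{2N−1} = 0. Then ‖f*f‖_{L²}² = (d³/3) · Σ_{k=−1}^{2N−2} (c_k² + c_k c_{k+1} + c_{k+1}²), ‖f*f‖_{L¹} = d² · Σ_{k=0}^{2N−2} c_k, and ‖f*f‖_{L^∞} = d · max_{0 ≤ k ≤ 2N−2} c_k. Consequently ‖f*f‖_{L²}²/(‖f*f‖_{L^∞}‖f*f‖_{L¹}) = (Σ_{k=−1}^{2N−2}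 (c_k² + c_k c_{k+1} + c_{k+1}²)/3) / ((Σ_{k=0}^{2N−2} c_k)·(max_{0 ≤ k ≤ 2N−2} c_k)), independent of a and d. -/
open MeasureTheory

lemma conv_ind (d : ℝ) (p q x : ℝ) :
    ∫ t, (Set.Ico p (p+d)).indicator (fun _ => (1:ℝ)) t *
      (Set.Ico q (q+d)).indicator (fun _ => (1:ℝ)) (x - t)
    = max 0 (d - |x - (p+q+d)|) := by
  have hrw : ∀ t : ℝ, (Set.Ico p (p+d)).indicator (fun _ => (1:ℝ)) t *
      (Set.Ico q (q+d)).indicator (fun _ => (1:ℝ)) (x - t)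
      = (Set.Ico p (p+d) ∩ Set.Ioc (x-q-d) (x-q)).indicator (fun _ => (1:ℝ)) t := by
    intro t
    have h2 : (Set.Ico q (q+d)).indicator (fun _ => (1:ℝ)) (x - t)
        = (Set.Ioc (x-q-d) (x-q)).indicator (fun _ => (1:ℝ)) t := by
      by_cases ht : x - t ∈ Set.Ico q (q+d)
      · rw [Set.indicator_of_mem ht, Set.indicator_of_mem]
        simp only [Set.mem_Ico] at ht
        constructor <;> [linarith [ht.2]; linarith [ht.1]]
      · rw [Set.indicator_of_notMem ht, Set.indicator_of_notMem]
        simp only [Set.mem_Ico, not_and, not_lt, Set.mem_Ioc, not_le] at ht ⊢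
        intro h1
        by_contra h2
        push_neg at h2
        have := ht (by linarith)
        linarith
    rw [h2]
    have := congrFun (Set.inter_indicator_one (M₀ := ℝ)
      (s := Set.Ico p (p+d)) (t := Set.Ioc (x-q-d) (x-q))) t
    simp only [Pi.mul_apply, Pi.one_apply] at this ⊢
    exact this.symm
  simp only [hrw]
  have hmeas : MeasurableSet (Set.Ico p (p+d) ∩ Set.Ioc (x-q-d) (x-q)) :=
    measurableSet_Ico.inter measurableSet_Ioc
  rw [show (fun t => (Set.Ico p (p+d) ∩ Set.Ioc (x-q-d) (x-q)).indicator (fun _ => (1:ℝ)) t)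
      = (Set.Ico p (p+d) ∩ Set.Ioc (x-q-d) (x-q)).indicator (1 : ℝ → ℝ) from rfl,
    MeasureTheory.integral_indicator_one hmeas]
  set l := max p (x-q-d) with hl
  set r := min (p+d) (x-q) with hr
  have hsub1 : Set.Ioo l r ⊆ Set.Ico p (p+d) ∩ Set.Ioc (x-q-d) (x-q) := by
    intro t ht
    simp only [Set.mem_Ioo, hl, hr, max_lt_iff, lt_min_iff] at ht
    obtain ⟨⟨h1, h2⟩, h3, h4⟩ := ht
    exact ⟨⟨h1.le, h3⟩, h2, h4.le⟩
  have hsub2 : Set.Ico p (p+d) ∩ Set.Ioc (x-q-d) (x-q) ⊆ Set.Icc l r := by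
    intro t ht
    obtain ⟨⟨h1, h3⟩, h2, h4⟩ := ht
    exact ⟨max_le h1 h2.le, le_min h3.le h4⟩
  have hvol : volume (Set.Ico p (p+d) ∩ Set.Ioc (x-q-d) (x-q)) = ENNReal.ofReal (r - l) := by
    apply le_antisymm
    · calc volume (Set.Ico p (p+d) ∩ Set.Ioc (x-q-d) (x-q)) ≤ volume (Set.Icc l r) :=
        measure_mono hsub2
      _ = ENNReal.ofReal (r - l) := Real.volume_Icc
    · calc ENNReal.ofReal (r - l) = volume (Set.Ioo l r) := Real.volume_Ioo.symm
      _ ≤ _ := measure_mono hsub1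
  rw [measureReal_def, hvol, ENNReal.toReal_ofReal']
  have key : r - l = d - |x - (p+q+d)| := by
    rw [hr, hl]
    rcases le_total (x - (p+q+d)) 0 with hy | hy
    · rw [abs_of_nonpos hy]
      rw [min_eq_right (by linarith), max_eq_left (by linarith)]
      ring
    · rw [abs_of_nonneg hy]
      rw [min_eq_left (by linarith), max_eq_right (by linarith)]
      ring
  rw [key, max_comm]

lemma conv_ind_integrable (d p q x : ℝ) :
    Integrable (fun t => (Set.Ico p (p+d)).indicator (fun _ => (1:ℝ)) t *
      (Set.Ico q (q+d)).indicator (fun _ => (1:ℝ)) (x - t)) := by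
  apply Integrable.mono' (g := (Set.Ico p (p+d)).indicator (fun _ => (1:ℝ)))
  · exact (integrable_indicator_iff measurableSet_Ico).2
      (integrableOn_const measure_Ico_lt_top.ne)
  · apply AEMeasurable.aestronglyMeasurable
    apply AEMeasurable.mul
    · exact (measurable_const.indicator measurableSet_Ico).aemeasurable
    · exact ((measurable_const.indicator measurableSet_Ico).comp
        (measurable_const.sub measurable_id)).aemeasurable
  · refine Filter.Eventually.of_forall fun t => ?_
    rw [Real.norm_eq_abs, abs_mul]
    calc |(Set.Ico p (p+d)).indicator (fun _ => (1:ℝ)) t| *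
        |(Set.Ico q (q+d)).indicator (fun _ => (1:ℝ)) (x - t)|
        ≤ |(Set.Ico p (p+d)).indicator (fun _ => (1:ℝ)) t| * 1 := by
          apply mul_le_mul_of_nonneg_left _ (abs_nonneg _)
          rw [abs_le]
          constructor
          · exact le_trans (by norm_num) (Set.indicator_nonneg (by intros; norm_num) _)
          · exact Set.indicator_le_self' (by intros; norm_num) _ |>.trans (le_refl _) |>.trans (by norm_num)
      _ = |(Set.Ico p (p+d)).indicator (fun _ => (1:ℝ)) t| := mul_one _
      _ = (Set.Ico p (p+d)).indicator (fun _ => (1:ℝ)) t := by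
          rw [abs_of_nonneg (Set.indicator_nonneg (by intros; norm_num) _)]

lemma integral_linear (u d A B : ℝ) :
    ∫ x in u..(u+d), (A*(u+d-x) + B*(x-u)) = d^2/2*(A+B) := by
  have : ∀ x, HasDerivAt (fun y => (B-A)/2*y^2 + (A*(u+d)-B*u)*y)
      (A*(u+d-x) + B*(x-u)) x := by
    intro x
    have h1 := ((hasDerivAt_pow 2 x).const_mul ((B-A)/2)).add
      ((hasDerivAt_id x).const_mul (A*(u+d)-B*u))
    exact h1.congr_deriv (by push_cast; ring)
  rw [intervalIntegral.integral_eq_sub_of_hasDerivAt (fun x _ => this x)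
    (Continuous.intervalIntegrable (by continuity) _ _)]
  ring

lemma integral_quad (u d A B : ℝ) :
    ∫ x in u..(u+d), (A*(u+d-x) + B*(x-u))^2 = d^3/3*(A^2+A*B+B^2) := by
  have : ∀ x, HasDerivAt (fun y => (B-A)^2/3*y^3 + (B-A)*(A*(u+d)-B*u)*y^2
      + (A*(u+d)-B*u)^2*y) ((A*(u+d-x) + B*(x-u))^2) x := by
    intro x
    have h1 := (((hasDerivAt_pow 3 x).const_mul ((B-A)^2/3)).add
      ((hasDerivAt_pow 2 x).const_mul ((B-A)*(A*(u+d)-B*u)))).add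
      ((hasDerivAt_id x).const_mul ((A*(u+d)-B*u)^2))
    exact h1.congr_deriv (by push_cast; ring)
  rw [intervalIntegral.integral_eq_sub_of_hasDerivAt (fun x _ => this x)
    (Continuous.intervalIntegrable (by continuity) _ _)]
  ring

lemma sum_reindex (n : ℕ) (φ : ℤ → ℝ) :
    ∑ m ∈ Finset.range n, φ ((m : ℤ) - 1)
      = ∑ k ∈ Finset.Icc (-1 : ℤ) ((n : ℤ) - 2), φ k := by
  refine Finset.sum_nbij' (fun m => (m : ℤ) - 1) (fun k => (k + 1).toNat) ?_ ?_ ?_ ?_ ?_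
  · intro m hm
    simp only [Finset.mem_range] at hm
    simp only [Finset.mem_Icc]
    omega
  · intro k hk
    simp only [Finset.mem_Icc] at hk
    simp only [Finset.mem_range]
    omega
  · intro m hm; simp only [Finset.mem_range] at hm; simp
  · intro k hk; simp only [Finset.mem_Icc] at hk; simp; omega
  · intros; rfl

lemma sum_shift (a b : ℤ) (φ : ℤ → ℝ) :
    ∑ k ∈ Finset.Icc a b, φ (k + 1) = ∑ k ∈ Finset.Icc (a+1) (b+1), φ k := by
  rw [← Finset.map_add_right_Icc a b 1, Finset.sum_map]
  rfl

/-- For a nonnegative step function `f` with height vector `h` (not all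
zero) on `N` equally spaced intervals of width `d`, writing `c k = Σ_{i+j=k} h_i h_j`
(extended by zero outside `0 ≤ k ≤ 2N−2`), one has
`‖f*f‖₂² = (d³/3) Σ (c_k² + c_k c_{k+1} + c_{k+1}²)` (sum over `k = −1,…,2N−2`),
`‖f*f‖₁ = d² Σ c_k`, `‖f*f‖_∞ = d · max_k c_k`, and hence the continuous ratio equals
the discrete ratio, independent of `a` and `d`. -/
theorem autoconv_step_norms (N : ℕ) (a d : ℝ) (hd : 0 < d) (h : Fin N → ℝ)
    (hnn : ∀ i, 0 ≤ h i) (hnz : ∃ i, h i ≠ 0) (f : ℝ → ℝ)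
    (hf : f = fun x => ∑ i : Fin N,
      h i * Set.indicator (Set.Ico (a + (i : ℕ) * d) (a + ((i : ℕ) + 1) * d))
        (fun _ => (1 : ℝ)) x)
    (c : ℤ → ℝ)
    (hc : c = fun k => ∑ p ∈ Finset.univ.filter
      (fun p : Fin N × Fin N => ((p.1 : ℕ) : ℤ) + ((p.2 : ℕ) : ℤ) = k), h p.1 * h p.2) :
    (∫ x, |autoconv f x| ^ 2) =
      d ^ 3 / 3 * ∑ k ∈ Finset.Icc (-1 : ℤ) (2 * (N : ℤ) - 2),
        (c k ^ 2 + c k * c (k + 1) + c (k + 1) ^ 2) ∧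
    (∫ x, |autoconv f x|) = d ^ 2 * ∑ k ∈ Finset.Icc (0 : ℤ) (2 * (N : ℤ) - 2), c k ∧
    essSup (fun x => |autoconv f x|) volume =
      d * (⨆ k : Fin (2 * N - 1), c ((k : ℕ) : ℤ)) ∧
    (∫ x, |autoconv f x| ^ 2) /
        (essSup (fun x => |autoconv f x|) volume * ∫ x, |autoconv f x|) =
      (∑ k ∈ Finset.Icc (-1 : ℤ) (2 * (N : ℤ) - 2),
          (c k ^ 2 + c k * c (k + 1) + c (k + 1) ^ 2) / 3) /
        ((∑ k ∈ Finset.Icc (0 : ℤ) (2 * (N : ℤ) - 2), c k) *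
          (⨆ k : Fin (2 * N - 1), c ((k : ℕ) : ℤ))) := by
  obtain ⟨i₀, hi₀⟩ := hnz
  have hN : 0 < N := i₀.pos
  haveI : Nonempty (Fin (2 * N - 1)) := ⟨⟨0, by omega⟩⟩
  set K : ℤ := 2 * (N : ℤ) - 2 with hK
  have hK0 : 0 ≤ K := by omega
  -- basic facts about c
  have hcnn : ∀ k, 0 ≤ c k := by
    intro k; rw [hc]
    exact Finset.sum_nonneg fun p _ => mul_nonneg (hnn _) (hnn _)
  have hczero : ∀ k : ℤ, k ∉ Finset.Icc (0:ℤ) K → c k = 0 := by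
    intro k hk
    rw [hc]
    apply Finset.sum_eq_zero
    intro p hp
    simp only [Finset.mem_filter, Finset.mem_univ, true_and] at hp
    exfalso
    simp only [Finset.mem_Icc, not_and, not_le] at hk
    have h1 := p.1.isLt; have h2 := p.2.isLt
    omega
  -- the tent functions and the explicit formula G for the autoconvolution
  set T : ℤ → ℝ → ℝ := fun k x => max 0 (d - |x - (2*a + ((k:ℝ)+1)*d)|) with hT
  set G : ℝ → ℝ := fun x => ∑ k ∈ Finset.Icc (0:ℤ) K, c k * T k x with hGdef
  have hTcont : ∀ k, Continuous (T k) := by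
    intro k
    exact continuous_const.max (continuous_const.sub (continuous_id.sub continuous_const).abs)
  have hGcont : Continuous G := continuous_finset_sum _ fun k _ => continuous_const.mul (hTcont k)
  -- Step 1: autoconv f = G
  have hG : ∀ x, autoconv f x = G x := by
    intro x
    have hint : autoconv f x = ∑ p : Fin N × Fin N, (h p.1 * h p.2) *
        (0 ⊔ (d - |x - (2*a + (((p.1:ℕ):ℝ) + ((p.2:ℕ):ℝ) + 1)*d)|)) := by
      have hfe : ∀ t, f t * f (x - t) = ∑ p : Fin N × Fin N,
          (h p.1 * h p.2) *
            ((Set.Ico (a + ((p.1:ℕ):ℝ)*d) ((a + ((p.1:ℕ):ℝ)*d) + d)).indicator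
                (fun _ => (1:ℝ)) t *
              (Set.Ico (a + ((p.2:ℕ):ℝ)*d) ((a + ((p.2:ℕ):ℝ)*d) + d)).indicator
                (fun _ => (1:ℝ)) (x - t)) := by
        intro t
        rw [hf]
        simp only
        rw [Finset.sum_mul_sum]
        rw [← Finset.sum_product', Finset.univ_product_univ]
        apply Finset.sum_congr rfl
        intro p _
        have e : a + (((p.1:ℕ):ℝ)+1)*d = (a + ((p.1:ℕ):ℝ)*d) + d := by ring
        have e2 : a + (((p.2:ℕ):ℝ)+1)*d = (a + ((p.2:ℕ):ℝ)*d) + d := by ring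
        rw [e, e2]
        ring
      rw [autoconv]
      simp only [hfe]
      rw [MeasureTheory.integral_finset_sum]
      · apply Finset.sum_congr rfl
        intro p _
        rw [MeasureTheory.integral_const_mul, conv_ind d]
        have e3 : a + ((p.1:ℕ):ℝ)*d + (a + ((p.2:ℕ):ℝ)*d) + d
            = 2*a + (((p.1:ℕ):ℝ) + ((p.2:ℕ):ℝ) + 1)*d := by ring
        rw [e3]
      · intro p _
        exact (conv_ind_integrable d _ _ x).const_mul _
    rw [hint]
    have hmaps : ∀ p : Fin N × Fin N, p ∈ Finset.univ →
        ((p.1:ℕ):ℤ) + ((p.2:ℕ):ℤ) ∈ Finset.Icc (0:ℤ) K := by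
      intro p _
      simp only [Finset.mem_Icc]
      have := p.1.isLt; have := p.2.isLt
      omega
    rw [← Finset.sum_fiberwise_of_maps_to hmaps]
    simp only [hGdef]
    apply Finset.sum_congr rfl
    intro k hk
    rw [hc, Finset.sum_mul]
    apply Finset.sum_congr rfl
    intro p hp
    simp only [Finset.mem_filter, Finset.mem_univ, true_and] at hp
    have ecast : ((p.1:ℕ):ℝ) + ((p.2:ℕ):ℝ) + 1 = ((k:ℤ):ℝ) + 1 := by
      rw [← hp]; push_cast; ring
    simp only [hT]
    rw [ecast]
  -- Step 2: the cell formula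
  have hcell : ∀ (m : ℤ) (x : ℝ), 2*a + (m:ℝ)*d ≤ x → x ≤ 2*a + ((m:ℝ)+1)*d →
      G x = c (m-1) * (2*a + ((m:ℝ)+1)*d - x) + c m * (x - (2*a + (m:ℝ)*d)) := by
    intro m x h1 h2
    have hTzero : ∀ k : ℤ, k ≠ m - 1 → k ≠ m → T k x = 0 := by
      intro k hk1 hk2
      have habs : d ≤ |x - (2*a + ((k:ℝ)+1)*d)| := by
        rcases lt_or_ge k (m-1) with hkm | hkm
        · have hk' : (k:ℝ) + 2 ≤ (m:ℝ) := by exact_mod_cast (by omega : k + 2 ≤ m)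
          rw [abs_of_nonneg (by nlinarith)]
          nlinarith
        · have hk3 : m + 1 ≤ k := by omega
          have hk' : (m:ℝ) + 1 ≤ (k:ℝ) := by exact_mod_cast hk3
          rw [abs_of_nonpos (by nlinarith)]
          nlinarith
      simp only [hT]
      rw [max_eq_left (by linarith)]
    have e1 : G x = ∑ k ∈ Finset.Icc (0:ℤ) K ∪ {m-1, m}, c k * T k x := by
      apply Finset.sum_subset Finset.subset_union_left
      intro k _ hk2
      rw [hczero k hk2, zero_mul]
    have e2 : ∑ k ∈ Finset.Icc (0:ℤ) K ∪ {m-1, m}, c k * T k x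
        = ∑ k ∈ ({m-1, m} : Finset ℤ), c k * T k x := by
      refine (Finset.sum_subset Finset.subset_union_right ?_).symm
      intro k _ hk2
      simp only [Finset.mem_insert, Finset.mem_singleton] at hk2
      push_neg at hk2
      rw [hTzero k hk2.1 hk2.2, mul_zero]
    have hmm : (m:ℤ) - 1 ≠ m := by omega
    have hT1 : T (m-1) x = 2*a + ((m:ℝ)+1)*d - x := by
      simp only [hT]
      push_cast
      rw [show ((m:ℝ) - 1 + 1) = (m:ℝ) by ring]
      rw [abs_of_nonneg (by linarith)]
      rw [max_eq_right (by linarith)]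
      ring
    have hT2 : T m x = x - (2*a + (m:ℝ)*d) := by
      simp only [hT]
      rw [abs_of_nonpos (by linarith)]
      rw [max_eq_right (by linarith)]
      ring
    rw [e1, e2, Finset.sum_pair hmm, hT1, hT2]
  -- floor
  have hfloor : ∀ x : ℝ, ∃ m : ℤ, 2*a + (m:ℝ)*d ≤ x ∧ x ≤ 2*a + ((m:ℝ)+1)*d := by
    intro x
    refine ⟨⌊(x - 2*a)/d⌋, ?_, ?_⟩
    · have := Int.floor_le ((x - 2*a)/d)
      rw [le_div_iff₀ hd] at this
      linarith
    · have := (Int.lt_floor_add_one ((x - 2*a)/d)).le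
      rw [div_le_iff₀ hd] at this
      push_cast at this
      linarith
  have hGnn : ∀ x, 0 ≤ G x := by
    intro x
    exact Finset.sum_nonneg fun k _ => mul_nonneg (hcnn k) (le_max_left _ _)
  -- sup of c
  set M : ℝ := ⨆ k : Fin (2 * N - 1), c ((k : ℕ) : ℤ) with hM
  have hbdd : BddAbove (Set.range fun k : Fin (2 * N - 1) => c ((k : ℕ) : ℤ)) :=
    Set.Finite.bddAbove (Set.finite_range _)
  have hcM : ∀ k : ℤ, c k ≤ M := by
    intro k
    by_cases hk : 0 ≤ k ∧ k ≤ K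
    · have hk' : k.toNat < 2 * N - 1 := by omega
      have : c k = c (((⟨k.toNat, hk'⟩ : Fin (2*N-1)) : ℕ) : ℤ) := by
        congr 1
        simp only
        omega
      rw [this]
      exact le_ciSup hbdd _
    · rw [hczero k (by simp only [Finset.mem_Icc]; omega)]
      have h0 : c (((⟨0, by omega⟩ : Fin (2*N-1)) : ℕ) : ℤ) ≤ M := le_ciSup hbdd _
      have : (0:ℝ) ≤ c (((⟨0, by omega⟩ : Fin (2*N-1)) : ℕ) : ℤ) := hcnn _
      linarith
  have hGle : ∀ x, G x ≤ d * M := by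
    intro x
    obtain ⟨m, h1, h2⟩ := hfloor x
    rw [hcell m x h1 h2]
    have e1 : c (m-1) * (2*a + ((m:ℝ)+1)*d - x) ≤ M * (2*a + ((m:ℝ)+1)*d - x) :=
      mul_le_mul_of_nonneg_right (hcM _) (by linarith)
    have e2 : c m * (x - (2*a + (m:ℝ)*d)) ≤ M * (x - (2*a + (m:ℝ)*d)) :=
      mul_le_mul_of_nonneg_right (hcM _) (by linarith)
    nlinarith
  -- node values
  have hnode : ∀ k : ℤ, 0 ≤ k → k ≤ K → G (2*a + ((k:ℝ)+1)*d) = d * c k := by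
    intro k hk1 hk2
    have e1 : 2*a + (((k+1):ℤ):ℝ)*d ≤ 2*a + ((k:ℝ)+1)*d := by push_cast; linarith
    have e2 : 2*a + ((k:ℝ)+1)*d ≤ 2*a + ((((k+1):ℤ):ℝ)+1)*d := by push_cast; nlinarith
    rw [hcell (k+1) _ e1 e2]
    have : (k + 1 - 1 : ℤ) = k := by ring
    rw [this]
    push_cast
    ring
  -- support
  have hsupp : ∀ x : ℝ, x ∉ Set.Icc (2*a) (2*a + (2*N)*d) → G x = 0 := by
    intro x hx
    simp only [Set.mem_Icc, not_and_or, not_le] at hx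
    simp only [hGdef]
    apply Finset.sum_eq_zero
    intro k hkmem
    simp only [Finset.mem_Icc] at hkmem
    have hk0 : (0:ℝ) ≤ (k:ℝ) := by exact_mod_cast hkmem.1
    have hk1 : (k:ℝ) ≤ 2*(N:ℝ) - 2 := by
      have : k ≤ 2*(N:ℤ) - 2 := hkmem.2
      have h' : (k:ℝ) ≤ ((2*(N:ℤ) - 2 : ℤ):ℝ) := by exact_mod_cast this
      push_cast at h'
      linarith
    have hz : T k x = 0 := by
      simp only [hT]
      rw [max_eq_left]
      have habs : d ≤ |x - (2*a + ((k:ℝ)+1)*d)| := by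
        rcases hx with hx | hx
        · rw [abs_of_nonpos (by nlinarith)]; nlinarith
        · rw [abs_of_nonneg (by nlinarith)]; nlinarith
      linarith
    rw [hz, mul_zero]
  -- splitting integrals
  have hsplit : ∀ φ : ℝ → ℝ, Continuous φ → (∀ x, x ∉ Set.Icc (2*a) (2*a + (2*N)*d) → φ x = 0) →
      ∫ x, φ x = ∑ m ∈ Finset.range (2*N), ∫ x in (2*a + (m:ℝ)*d)..(2*a + ((m:ℝ)+1)*d), φ x := by
    intro φ hφ hφ0
    set x_ : ℕ → ℝ := fun n => 2*a + (n:ℝ)*d with hx_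
    have hle : x_ 0 ≤ x_ (2*N) := by
      simp only [hx_]
      push_cast
      nlinarith [hN]
    have hsub : ∀ x, x ∉ Set.Icc (x_ 0) (x_ (2*N)) → φ x = 0 := by
      intro x hx
      apply hφ0
      intro hmem
      apply hx
      simp only [hx_, Set.mem_Icc] at hmem ⊢
      push_cast
      constructor <;> [linarith [hmem.1]; linarith [hmem.2]]
    have h1 : ∫ x, φ x = ∫ x in Set.Icc (x_ 0) (x_ (2*N)), φ x :=
      (MeasureTheory.setIntegral_eq_integral_of_forall_compl_eq_zero hsub).symm
    rw [h1, MeasureTheory.integral_Icc_eq_integral_Ioc, ← intervalIntegral.integral_of_le hle,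
      ← intervalIntegral.sum_integral_adjacent_intervals
        (fun i _ => (hφ.intervalIntegrable (x_ i) (x_ (i+1))))]
    apply Finset.sum_congr rfl
    intro m _
    have hA : x_ m = 2*a + (m:ℝ)*d := rfl
    have hB : x_ (m+1) = 2*a + ((m:ℝ)+1)*d := by simp only [hx_]; push_cast; ring
    rw [hA, hB]
  -- piecewise formulas on cells
  have hcell' : ∀ m : ℕ, ∀ x ∈ Set.uIcc (2*a + (m:ℝ)*d) (2*a + ((m:ℝ)+1)*d),
      G x = c ((m:ℤ)-1) * ((2*a + (m:ℝ)*d) + d - x) + c (m:ℤ) * (x - (2*a + (m:ℝ)*d)) := by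
    intro m x hx
    rw [Set.uIcc_of_le (by nlinarith)] at hx
    have := hcell (m:ℤ) x (by push_cast; exact hx.1) (by push_cast; linarith [hx.2])
    push_cast at this
    rw [this]
    ring
  -- part 2 : L¹
  have habs : ∀ x, |autoconv f x| = G x := fun x => by rw [hG x, abs_of_nonneg (hGnn x)]
  have hpieceL : ∀ m : ℕ, ∫ x in (2*a + (m:ℝ)*d)..(2*a + ((m:ℝ)+1)*d), G x
      = d^2/2 * (c ((m:ℤ)-1) + c (m:ℤ)) := by
    intro m
    rw [show (2*a + ((m:ℝ)+1)*d) = (2*a + (m:ℝ)*d) + d from by ring]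
    rw [intervalIntegral.integral_congr
      (g := fun x => c ((m:ℤ)-1) * ((2*a + (m:ℝ)*d) + d - x) + c (m:ℤ) * (x - (2*a + (m:ℝ)*d)))
      (fun x hx => by
        rw [show (2*a + (m:ℝ)*d) + d = 2*a + ((m:ℝ)+1)*d from by ring] at hx
        exact hcell' m x hx)]
    exact integral_linear _ _ _ _
  have hpieceQ : ∀ m : ℕ, ∫ x in (2*a + (m:ℝ)*d)..(2*a + ((m:ℝ)+1)*d), (G x)^2
      = d^3/3 * ((c ((m:ℤ)-1))^2 + c ((m:ℤ)-1) * c (m:ℤ) + (c (m:ℤ))^2) := by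
    intro m
    rw [show (2*a + ((m:ℝ)+1)*d) = (2*a + (m:ℝ)*d) + d from by ring]
    rw [intervalIntegral.integral_congr
      (g := fun x => (c ((m:ℤ)-1) * ((2*a + (m:ℝ)*d) + d - x) + c (m:ℤ) * (x - (2*a + (m:ℝ)*d)))^2)
      (fun x hx => by
        rw [show (2*a + (m:ℝ)*d) + d = 2*a + ((m:ℝ)+1)*d from by ring] at hx
        rw [hcell' m x hx])]
    exact integral_quad _ _ _ _
  have hKcast : ((2*N : ℕ):ℤ) - 2 = K := by push_cast; omega
  have part2 : (∫ x, |autoconv f x|) = d ^ 2 * ∑ k ∈ Finset.Icc (0 : ℤ) K, c k := by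
    simp only [habs]
    rw [hsplit G hGcont hsupp]
    rw [Finset.sum_congr rfl (fun m _ => hpieceL m)]
    have hre : ∀ m ∈ Finset.range (2*N), d^2/2 * (c ((m:ℤ)-1) + c (m:ℤ))
        = (fun k : ℤ => d^2/2 * (c k + c (k+1))) ((m:ℤ)-1) := by
      intro m _
      simp only
      rw [show ((m:ℤ)-1)+1 = (m:ℤ) from by ring]
    rw [Finset.sum_congr rfl hre, sum_reindex (2*N) (fun k => d^2/2 * (c k + c (k+1))), hKcast]
    have hA : ∑ k ∈ Finset.Icc (-1:ℤ) K, c k = ∑ k ∈ Finset.Icc (0:ℤ) K, c k := by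
      rw [show Finset.Icc (-1:ℤ) K = insert (-1) (Finset.Icc 0 K) from by
        ext z; simp only [Finset.mem_Icc, Finset.mem_insert]; omega]
      rw [Finset.sum_insert (by simp), hczero (-1) (by simp), zero_add]
    have hB : ∑ k ∈ Finset.Icc (-1:ℤ) K, c (k+1) = ∑ k ∈ Finset.Icc (0:ℤ) K, c k := by
      rw [sum_shift, show (-1+1 : ℤ) = 0 from by norm_num]
      rw [show Finset.Icc (0:ℤ) (K+1) = insert (K+1) (Finset.Icc 0 K) from by
        ext z; simp only [Finset.mem_Icc, Finset.mem_insert]; omega]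
      rw [Finset.sum_insert (by simp), hczero (K+1) (by simp), zero_add]
    rw [show (∑ k ∈ Finset.Icc (-1:ℤ) K, d^2/2 * (c k + c (k+1)))
        = d^2/2 * ((∑ k ∈ Finset.Icc (-1:ℤ) K, c k) + ∑ k ∈ Finset.Icc (-1:ℤ) K, c (k+1)) from by
      rw [← Finset.sum_add_distrib, Finset.mul_sum]]
    rw [hA, hB]
    ring
  -- part 1 : L²
  have part1 : (∫ x, |autoconv f x| ^ 2) =
      d ^ 3 / 3 * ∑ k ∈ Finset.Icc (-1 : ℤ) K, (c k ^ 2 + c k * c (k + 1) + c (k + 1) ^ 2) := by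
    have habs2 : ∀ x, |autoconv f x|^2 = (G x)^2 := fun x => by rw [hG x, sq_abs]
    simp only [habs2]
    rw [hsplit (fun x => (G x)^2) (hGcont.pow 2)
      (fun x hx => by rw [hsupp x hx]; norm_num)]
    rw [Finset.sum_congr rfl (fun m _ => hpieceQ m)]
    have hre : ∀ m ∈ Finset.range (2*N), d^3/3 * ((c ((m:ℤ)-1))^2 + c ((m:ℤ)-1) * c (m:ℤ) + (c (m:ℤ))^2)
        = (fun k : ℤ => d^3/3 * ((c k)^2 + c k * c (k+1) + (c (k+1))^2)) ((m:ℤ)-1) := by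
      intro m _
      simp only
      rw [show ((m:ℤ)-1)+1 = (m:ℤ) from by ring]
    rw [Finset.sum_congr rfl hre,
      sum_reindex (2*N) (fun k => d^3/3 * ((c k)^2 + c k * c (k+1) + (c (k+1))^2)), hKcast]
    rw [Finset.mul_sum]
  -- part 3 : essSup
  have part3 : essSup (fun x => |autoconv f x|) volume = d * M := by
    simp only [habs]
    haveI : Filter.NeBot (ae (volume : Measure ℝ)) := by
      rw [ae_neBot]
      intro h0
      have h01 : (volume : Measure ℝ) (Set.Icc 0 1) = 0 := by rw [h0]; rfl
      rw [Real.volume_Icc] at h01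
      norm_num at h01
    have hub : essSup G volume ≤ d * M := by
      rw [essSup]
      exact Filter.limsup_le_of_le
        (Filter.IsBoundedUnder.isCoboundedUnder_le (Filter.isBoundedUnder_of ⟨0, hGnn⟩))
        (Filter.Eventually.of_forall hGle)
    have hlb : d * M ≤ essSup G volume := by
      obtain ⟨k₀, hk₀⟩ := Finite.exists_max (fun k : Fin (2*N-1) => c ((k:ℕ):ℤ))
      have hMeq : M = c (((k₀:ℕ):ℕ):ℤ) := le_antisymm (ciSup_le hk₀) (le_ciSup hbdd k₀)
      have hk₀K : (((k₀:ℕ)):ℤ) ≤ K := by have := k₀.isLt; omega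
      have hnodeval := hnode ((k₀:ℕ):ℤ) (Int.natCast_nonneg _) hk₀K
      rw [← hMeq] at hnodeval
      set x₀ : ℝ := 2*a + ((((k₀:ℕ):ℤ):ℝ)+1)*d with hx₀def
      apply le_of_forall_sub_le
      intro ε hε
      rw [essSup]
      apply Filter.le_limsup_of_frequently_le _ (Filter.isBoundedUnder_of ⟨d*M, hGle⟩)
      have hopen : IsOpen {x : ℝ | d*M - ε < G x} := isOpen_lt continuous_const hGcont
      have hx₀mem : x₀ ∈ {x : ℝ | d*M - ε < G x} := by
        simp only [Set.mem_setOf_eq, hx₀def]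
        rw [hnodeval]
        linarith
      have hpos : volume {x : ℝ | d*M - ε < G x} ≠ 0 :=
        (hopen.measure_pos volume ⟨x₀, hx₀mem⟩).ne'
      have hfreq : ∃ᵐ x ∂(volume : Measure ℝ), d*M - ε < G x :=
        (MeasureTheory.frequently_ae_iff).mpr hpos
      exact hfreq.mono fun x hx => hx.le
    exact le_antisymm hub hlb
  -- positivity
  have hi₀' : 0 < h i₀ := lt_of_le_of_ne (hnn i₀) (Ne.symm hi₀)
  have hc2i : 0 < c (2 * (i₀:ℕ)) := by
    have hmem : (i₀, i₀) ∈ Finset.univ.filter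
        (fun p : Fin N × Fin N => ((p.1 : ℕ) : ℤ) + ((p.2 : ℕ) : ℤ) = 2 * (i₀:ℕ)) := by
      simp only [Finset.mem_filter, Finset.mem_univ, true_and]
      push_cast; ring
    have hle := Finset.single_le_sum (f := fun p : Fin N × Fin N => h p.1 * h p.2)
      (fun p _ => mul_nonneg (hnn _) (hnn _)) hmem
    have heq : c (2 * (i₀:ℕ)) = ∑ p ∈ Finset.univ.filter
        (fun p : Fin N × Fin N => ((p.1 : ℕ) : ℤ) + ((p.2 : ℕ) : ℤ) = 2 * (i₀:ℕ)), h p.1 * h p.2 := by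
      rw [hc]
    rw [heq]
    exact lt_of_lt_of_le (mul_pos hi₀' hi₀') hle
  have hmemI : (2 * (i₀:ℕ) : ℤ) ∈ Finset.Icc (0:ℤ) K := by
    simp only [Finset.mem_Icc]
    have := i₀.isLt
    omega
  have hS1pos : 0 < ∑ k ∈ Finset.Icc (0 : ℤ) K, c k :=
    lt_of_lt_of_le hc2i (Finset.single_le_sum (fun k _ => hcnn k) hmemI)
  have hMpos : 0 < M := lt_of_lt_of_le hc2i (hcM _)
  refine ⟨part1, part2, part3, ?_⟩
  rw [part1, part2, part3]
  rw [show (∑ k ∈ Finset.Icc (-1:ℤ) K, (c k ^ 2 + c k * c (k + 1) + c (k + 1) ^ 2) / 3)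
      = (∑ k ∈ Finset.Icc (-1:ℤ) K, (c k ^ 2 + c k * c (k + 1) + c (k + 1) ^ 2)) / 3
    from (Finset.sum_div _ _ _).symm]
  rw [div_div, div_eq_div_iff (by positivity) (by positivity)]
  ring
end
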